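/- arXiv:1602.08279 — 5 statements merged into one kernel-verified Lean document; each statement's English description precedes it below -/
import Mathlib

section
/- Let H be a finite-dimensional complex Hilbert space and let (f_1,…,f_n) be a frame for H. Then Φ(f_1,…,f_n) = (f_1,…,f_n) if and only if (f_1,…,f_n) is a zero extended orthonormal basis for H. -/
open scoped ComplexInnerProductSpace
open Finset Filter

open scoped Classical in
/-- One step of the generalized Gram–Schmidt procedure (GGSP): step `k` uses the
input vector `fk = f k` and the current tuple `g` (whose entries at indices `< k`
have already been processed).  Here `⟪a, b⟫` is conjugate-linear in `a`, so the
paper's `⟨f_k, g_j⟩` (conjugate-linear in the second slot) is `⟪g j, f k⟫`. -/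
noncomputable def ggspStep {H : Type*} [NormedAddCommGroup H] [InnerProductSpace ℂ H]
    {n : ℕ} (k : Fin n) (fk : H) (g : Fin n → H) : Fin n → H :=
  if fk = 0 then Function.update g k 0
  else
    let u := fk - ∑ j ∈ Finset.univ.filter (fun j : Fin n => j < k), ⟪g j, fk⟫ • g j
    if u = 0 then
      fun i =>
        if i < k then
          g i + (((1 / ‖fk‖ ^ 2) * (1 / Real.sqrt (1 + ‖fk‖ ^ 2) - 1) : ℝ)) •
            (⟪fk, g i⟫ • fk)
        else if i = k then (Real.sqrt (1 + ‖fk‖ ^ 2))⁻¹ • fk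
        else g i
    else Function.update g k (‖u‖⁻¹ • u)

/-- The generalized Gram–Schmidt procedure `Φ` of Casazza--Kutyniok. -/
noncomputable def GGSP {H : Type*} [NormedAddCommGroup H] [InnerProductSpace ℂ H]
    {n : ℕ} (f : Fin n → H) : Fin n → H :=
  (List.finRange n).foldl (fun g k => ggspStep k (f k) g) f

/-- `(f i)₁ⁿ` is a frame for `H`. -/
def IsFrame {H : Type*} [NormedAddCommGroup H] [InnerProductSpace ℂ H]
    {n : ℕ} (f : Fin n → H) : Prop :=
  ∃ A B : ℝ, 0 < A ∧ A ≤ B ∧ ∀ x : H,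
    A * ‖x‖ ^ 2 ≤ ∑ i, ‖⟪x, f i⟫‖ ^ 2 ∧ ∑ i, ‖⟪x, f i⟫‖ ^ 2 ≤ B * ‖x‖ ^ 2

/-- `f` is a zero extended orthonormal basis for the subspace `W`: after removing the
zero vectors, the remaining vectors form an orthonormal basis of `W`. -/
def IsZeroExtONB {H : Type*} [NormedAddCommGroup H] [InnerProductSpace ℂ H]
    {n : ℕ} (W : Submodule ℂ H) (f : Fin n → H) : Prop :=
  (∀ i, f i ≠ 0 → ‖f i‖ = 1) ∧ (∀ i j, i ≠ j → ⟪f i, f j⟫ = 0) ∧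
    Submodule.span ℂ (Set.range f) = W

section Aux
variable {H : Type*} [NormedAddCommGroup H] [InnerProductSpace ℂ H] {n : ℕ}

noncomputable def ggspAux (f : Fin n → H) (m : ℕ) : Fin n → H :=
  ((List.finRange n).take m).foldl (fun g k => ggspStep k (f k) g) f

lemma ggspAux_zero (f : Fin n → H) : ggspAux f 0 = f := rfl

lemma ggspAux_n (f : Fin n → H) : ggspAux f n = GGSP f := by
  simp [ggspAux, GGSP, List.take_of_length_le]

lemma ggspAux_succ (f : Fin n → H) (m : ℕ) (hm : m < n) :
    ggspAux f (m + 1) = ggspStep ⟨m, hm⟩ (f ⟨m, hm⟩) (ggspAux f m) := by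
  have h : (List.finRange n).take (m+1)
      = (List.finRange n).take m ++ [(⟨m, hm⟩ : Fin n)] := by
    rw [List.take_succ, List.getElem?_eq_getElem (by simpa using hm)]
    simp
  rw [ggspAux, h, List.foldl_append]
  rfl

lemma ggspStep_apply_of_lt (k i : Fin n) (h : k < i) (fk : H) (g : Fin n → H) :
    ggspStep k fk g i = g i := by
  classical
  simp only [ggspStep]
  split_ifs with h1 h2
  · exact Function.update_of_ne (ne_of_gt h) _ _
  · simp only [if_neg (fun hi => absurd (lt_trans h hi) (lt_irrefl _) : ¬ i < k),
      if_neg (ne_of_gt h)]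
  · exact Function.update_of_ne (ne_of_gt h) _ _

lemma ggspAux_apply_of_le (f : Fin n → H) (m : ℕ) (i : Fin n) (h : m ≤ i.val) :
    ggspAux f m i = f i := by
  induction m with
  | zero => rfl
  | succ m ih =>
    have hm : m < n := lt_of_lt_of_le (Nat.lt_of_succ_le h) (le_of_lt i.isLt)
    rw [ggspAux_succ f m hm, ggspStep_apply_of_lt _ _ (by
      exact (Fin.lt_def).2 (Nat.lt_of_succ_le h))]
    exact ih (le_of_lt (Nat.lt_of_succ_le h))

/-- The key per-index fact extracted from a fixed point. -/
def GGSPKey (f : Fin n → H) (k : Fin n) : Prop :=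
  f k = 0 ∨
    ((f k - ∑ j ∈ Finset.univ.filter (fun j : Fin n => j < k), ⟪f j, f k⟫ • f j) ≠ 0 ∧
      ‖f k - ∑ j ∈ Finset.univ.filter (fun j : Fin n => j < k), ⟪f j, f k⟫ • f j‖⁻¹ •
        (f k - ∑ j ∈ Finset.univ.filter (fun j : Fin n => j < k), ⟪f j, f k⟫ • f j) = f k)

lemma one_lt_sqrt_one_add_sq {x : H} (hx : x ≠ 0) : 1 < Real.sqrt (1 + ‖x‖ ^ 2) := by
  have hn : 0 < ‖x‖ := norm_pos_iff.2 hx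
  exact (Real.lt_sqrt (by norm_num)).2 (by nlinarith)

lemma stepBack {f g : Fin n → H} {m : ℕ} (hm : m < n)
    (hg : g ⟨m, hm⟩ = f ⟨m, hm⟩)
    (hstep : ggspStep ⟨m, hm⟩ (f ⟨m, hm⟩) g = f) :
    g = f ∧ GGSPKey f ⟨m, hm⟩ := by
  classical
  set k : Fin n := ⟨m, hm⟩ with hk
  simp only [ggspStep] at hstep
  split_ifs at hstep with h1 h2
  · refine ⟨funext fun i => ?_, Or.inl h1⟩
    by_cases hik : i = k
    · rw [hik, hg]
    · rw [← hstep]; exact (Function.update_of_ne hik _ _).symm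
  · -- impossible branch: u = 0, f k ≠ 0
    exfalso
    have hkk := congrFun hstep k
    simp only [lt_irrefl, if_false, if_true] at hkk
    have hs := one_lt_sqrt_one_add_sq h1
    have hz : ((Real.sqrt (1 + ‖f k‖ ^ 2))⁻¹ - 1) • f k = 0 := by
      rw [sub_smul, one_smul, hkk, sub_self]
    rcases smul_eq_zero.1 hz with h | h
    · have h' := sub_eq_zero.mp h
      rw [inv_eq_one] at h'
      linarith
    · exact h1 h
  · have hgf : g = f := by
      funext i
      by_cases hik : i = k
      · rw [hik, hg]
      · rw [← hstep]; exact (Function.update_of_ne hik _ _).symm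
    subst hgf
    refine ⟨rfl, Or.inr ⟨h2, ?_⟩⟩
    have := congrFun hstep k
    rwa [Function.update_self] at this

end Aux

section Main
variable {H : Type*} [NormedAddCommGroup H] [InnerProductSpace ℂ H] {n : ℕ}

lemma ggspAux_fixed {f : Fin n → H} (hfix : GGSP f = f) :
    ∀ j, ggspAux f (n - j) = f := by
  intro j
  induction j with
  | zero => rw [Nat.sub_zero, ggspAux_n, hfix]
  | succ j ih =>
    by_cases h : n - j = 0
    · rw [Nat.sub_succ, h]; rfl
    · set m := n - (j + 1) with hmdef
      have hm1 : n - j = m + 1 := by omega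
      have hm : m < n := by omega
      rw [hm1] at ih
      rw [ggspAux_succ f m hm] at ih
      exact (stepBack hm (ggspAux_apply_of_le f m _ le_rfl) ih).1

lemma key_of_fixed {f : Fin n → H} (hfix : GGSP f = f) (k : Fin n) : GGSPKey f k := by
  have h1 := ggspAux_fixed hfix (n - (k.val + 1))
  have hk1 : n - (n - (k.val + 1)) = k.val + 1 := Nat.sub_sub_self k.isLt
  rw [hk1, ggspAux_succ f k.val k.isLt] at h1
  have h2 := (stepBack k.isLt (ggspAux_apply_of_le f k.val _ le_rfl) h1).2
  simpa using h2

lemma onb_of_key {f : Fin n → H} (hkey : ∀ k, GGSPKey f k) :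
    (∀ i, f i ≠ 0 → ‖f i‖ = 1) ∧ ∀ i j : Fin n, i < j → ⟪f i, f j⟫ = 0 := by
  classical
  suffices h : ∀ N : ℕ, ∀ k : Fin n, k.val < N →
      ((f k ≠ 0 → ‖f k‖ = 1) ∧ ∀ i : Fin n, i < k → ⟪f i, f k⟫ = 0) by
    exact ⟨fun i hi => (h n i i.isLt).1 hi, fun i j hij => (h n j j.isLt).2 i hij⟩
  intro N
  induction N with
  | zero => intro k hk; omega
  | succ N ih =>
    intro k hk
    by_cases hk0 : f k = 0
    · exact ⟨fun h => absurd hk0 h, fun i _ => by rw [hk0, inner_zero_right]⟩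
    rcases hkey k with h | ⟨hu, heq⟩
    · exact absurd h hk0
    set u := f k - ∑ j ∈ Finset.univ.filter (fun j : Fin n => j < k), ⟪f j, f k⟫ • f j
      with hu_def
    have hun : ‖u‖ ≠ 0 := norm_ne_zero_iff.2 hu
    have hnorm : ‖f k‖ = 1 := by
      rw [← heq, norm_smul, norm_inv, norm_norm, inv_mul_cancel₀ hun]
    refine ⟨fun _ => hnorm, fun i hik => ?_⟩
    have hiN : i.val < N := by
      have := (Fin.lt_def).1 hik; omega
    by_cases hi0 : f i = 0
    · rw [hi0, inner_zero_left]
    have hueq : u = ‖u‖ • f k := by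
      rw [← heq, smul_smul]
      norm_num [mul_inv_cancel₀ hun]
    have hinner : ⟪f i, u⟫ = 0 := by
      rw [hu_def, inner_sub_right, inner_sum]
      have hsum : ∑ j ∈ Finset.univ.filter (fun j : Fin n => j < k),
          ⟪f i, ⟪f j, f k⟫ • f j⟫ = ⟪f i, f k⟫ := by
        rw [Finset.sum_eq_single i]
        · rw [inner_smul_right, inner_self_eq_norm_sq_to_K, (ih i hiN).1 hi0]
          norm_num
        · intro j hj hji
          have hjk : j < k := (Finset.mem_filter.1 hj).2
          have hij0 : ⟪f i, f j⟫ = 0 := by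
            rcases lt_or_gt_of_ne (Ne.symm hji) with hij | hij
            · exact (ih j (by have := (Fin.lt_def).1 hjk; omega)).2 i hij
            · have := (ih i hiN).2 j hij
              rw [← inner_conj_symm, this, map_zero]
          rw [inner_smul_right, hij0, mul_zero]
        · intro hni
          simp only [Finset.mem_filter, Finset.mem_univ, true_and] at hni
          exact absurd hik hni
      rw [hsum, sub_self]
    rw [hueq, RCLike.real_smul_eq_coe_smul (K := ℂ), inner_smul_right] at hinner
    rcases mul_eq_zero.1 hinner with h | h
    · exact absurd (Complex.ofReal_eq_zero.1 h) hun
    · exact h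

lemma ggsp_fixed_of_onb {f : Fin n → H} (h1 : ∀ i, f i ≠ 0 → ‖f i‖ = 1)
    (h2 : ∀ i j : Fin n, i ≠ j → ⟪f i, f j⟫ = 0) : GGSP f = f := by
  classical
  have hstep : ∀ k : Fin n, ggspStep k (f k) f = f := by
    intro k
    by_cases hk : f k = 0
    · simp only [ggspStep, if_pos hk]
      rw [← hk]
      exact Function.update_eq_self k f
    · simp only [ggspStep, if_neg hk]
      have hsum : ∑ j ∈ Finset.univ.filter (fun j : Fin n => j < k), ⟪f j, f k⟫ • f j = 0 := by
        apply Finset.sum_eq_zero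
        intro j hj
        rw [h2 j k (ne_of_lt (Finset.mem_filter.1 hj).2), zero_smul]
      rw [hsum, sub_zero, if_neg hk, h1 k hk, inv_one, one_smul]
      exact Function.update_eq_self k f
  have hall : ∀ m, m ≤ n → ggspAux f m = f := by
    intro m
    induction m with
    | zero => intro _; rfl
    | succ m ih =>
      intro h
      rw [ggspAux_succ f m (Nat.lt_of_succ_le h), ih (le_of_lt (Nat.lt_of_succ_le h))]
      exact hstep _
  rw [← ggspAux_n]
  exact hall n le_rfl

end Main

lemma span_top_of_frame {H : Type*} [NormedAddCommGroup H] [InnerProductSpace ℂ H]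
    [FiniteDimensional ℂ H] {n : ℕ} {f : Fin n → H} (hf : IsFrame f) :
    Submodule.span ℂ (Set.range f) = ⊤ := by
  rw [← Submodule.orthogonal_eq_bot_iff]
  rw [Submodule.eq_bot_iff]
  intro x hx
  obtain ⟨A, B, hA, _, hfr⟩ := hf
  have hxi : ∀ i, ⟪x, f i⟫ = (0 : ℂ) := by
    intro i
    have hfi : f i ∈ Submodule.span ℂ (Set.range f) :=
      Submodule.subset_span ⟨i, rfl⟩
    have := (Submodule.mem_orthogonal _ x).1 hx (f i) hfi
    rw [← inner_conj_symm, this, map_zero]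
  have hsum : ∑ i, ‖⟪x, f i⟫‖ ^ 2 = 0 := by
    apply Finset.sum_eq_zero
    intro i _
    rw [hxi i, norm_zero]
    norm_num
  have hle := (hfr x).1
  rw [hsum] at hle
  have hx0 : ‖x‖ = 0 := by
    by_contra h
    have hp : 0 < ‖x‖ ^ 2 := by positivity
    nlinarith
  exact norm_eq_zero.1 hx0

/-- A frame is a fixed point of the GGSP `Φ` iff it is a zero extended orthonormal
basis for `H`. -/
theorem ggsp_fixed_iff_zeroExtONB {H : Type*} [NormedAddCommGroup H]
    [InnerProductSpace ℂ H] [FiniteDimensional ℂ H] {n : ℕ} (f : Fin n → H)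
    (hf : IsFrame f) :
    GGSP f = f ↔ IsZeroExtONB (⊤ : Submodule ℂ H) f := by
  constructor
  · intro hfix
    obtain ⟨hn, ho⟩ := onb_of_key (key_of_fixed hfix)
    refine ⟨hn, fun i j hij => ?_, span_top_of_frame hf⟩
    rcases lt_or_gt_of_ne hij with h | h
    · exact ho i j h
    · rw [← inner_conj_symm, ho j i h, map_zero]
  · rintro ⟨h1, h2, _⟩
    exact ggsp_fixed_of_onb h1 h2
end

section
/- Let H be a finite-dimensional complex Hilbert space and let (f_1,…,f_n) be a frame for H with f_n ∉ span{f_1,…,f_{n−1}}. Let P be the orthogonal projection of H onto span{f_1,…,f_{n−1}} and let α = ‖(I−P)f_n‖^{−1}. Then for every m ≥ 1, the n-th vector of the m-th iterate Φ^m(f_1,…,f_n) equals α(I−P)f_n; in particular it is the same for all m ≥ 1. -/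
open scoped ComplexInnerProductSpace
open Finset Filter

/-!
The invariant of the procedure: after `k` steps, the processed vectors `g₁, …, g_k` form a
Parseval frame for `span {f₁, …, f_k}`, i.e. `∑ⱼ gⱼ ⟪gⱼ, ·⟫` is the orthogonal projection onto
that span. A vector outside the current span contributes the normalisation of its residual
`(I - P) f_k`, which is orthogonal to the span; a redundant vector `f_k ≠ 0` replaces `gⱼ` by
`T gⱼ` with `T = I + c f_k ⟪f_k, ·⟫` self-adjoint and appends `d f_k`, and the coefficients `c, d`
of the procedure are those for which `T P T + d² f_k ⟪f_k, ·⟫ = P`.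

In the last step of `Φ f` the residual `(I - P) fₙ` is nonzero, so the last vector becomes
`e = α (I - P) fₙ` while the others stay in `W`. Applying `Φ` to a tuple whose first `n - 1`
vectors lie in `W` and whose last vector is the unit vector `e ⊥ W` reproduces such a tuple: the
projection of `e` onto the span of the first `n - 1` vectors vanishes, so `e` is normalised to
itself.
-/

open scoped InnerProductSpace
open InnerProductSpace (rankOne rankOne_apply)

section ParsevalFrame

variable {𝕜 E ι : Type*} [RCLike 𝕜] [NormedAddCommGroup E] [InnerProductSpace 𝕜 E]
  [FiniteDimensional 𝕜 E]

def IsParsevalFrame (V : Submodule 𝕜 E) (s : Finset ι) (g : ι → E) : Prop :=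
  ∑ j ∈ s, rankOne 𝕜 (g j) (g j) = V.starProjection

theorem Submodule.sup_span_singleton_sub_starProjection (V : Submodule 𝕜 E) (v : E) :
    V ⊔ 𝕜 ∙ (v - V.starProjection v) = V ⊔ 𝕜 ∙ v := by
  refine le_antisymm (sup_le le_sup_left ?_) (sup_le le_sup_left ?_) <;>
    rw [Submodule.span_singleton_le_iff_mem]
  · exact sub_mem (Submodule.mem_sup_right (Submodule.mem_span_singleton_self v))
      (Submodule.mem_sup_left (V.starProjection_apply_mem v))
  · simpa using add_mem
      (Submodule.mem_sup_right (Submodule.mem_span_singleton_self (v - V.starProjection v)))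
      (Submodule.mem_sup_left (V.starProjection_apply_mem v))

theorem Submodule.sub_starProjection_ne_zero {V : Submodule 𝕜 E} {v : E} (hv : v ∉ V) :
    v - V.starProjection v ≠ 0 :=
  sub_ne_zero.2 fun h => hv (Submodule.starProjection_eq_self_iff.1 h.symm)

theorem Submodule.starProjection_sup_span_singleton {V : Submodule 𝕜 E} {e : E}
    (he : e ∈ Vᗮ) (he1 : ‖e‖ = 1) :
    (V ⊔ 𝕜 ∙ e).starProjection = V.starProjection + rankOne 𝕜 e e := by
  ext x
  rw [add_apply, rankOne_apply]
  refine Submodule.eq_starProjection_of_mem_orthogonal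
    (add_mem (Submodule.mem_sup_left (V.starProjection_apply_mem x))
      (Submodule.mem_sup_right (Submodule.smul_mem _ _ (Submodule.mem_span_singleton_self e))))
    ?_
  rw [← Submodule.inf_orthogonal, Submodule.mem_inf,
    Submodule.mem_orthogonal_singleton_iff_inner_right, sub_add_eq_sub_sub]
  refine ⟨sub_mem (V.sub_starProjection_mem_orthogonal x) (Submodule.smul_mem _ _ he), ?_⟩
  rw [inner_sub_right, inner_sub_right, inner_smul_right, inner_self_eq_norm_sq_to_K, he1,
    Submodule.inner_left_of_mem_orthogonal (V.starProjection_apply_mem x) he]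
  simp

namespace IsParsevalFrame

variable {V : Submodule 𝕜 E} {s : Finset ι} {g : ι → E}

theorem sum_inner_smul (h : IsParsevalFrame V s g) (x : E) :
    ∑ j ∈ s, ⟪g j, x⟫_𝕜 • g j = V.starProjection x := by
  rw [← show _ = V.starProjection from h, _root_.sum_apply]
  simp only [rankOne_apply]

theorem sum_norm_inner_sq (h : IsParsevalFrame V s g) (x : E) :
    ∑ j ∈ s, ‖⟪g j, x⟫_𝕜‖ ^ 2 = ‖V.starProjection x‖ ^ 2 := by
  have key : ((∑ j ∈ s, ‖⟪g j, x⟫_𝕜‖ ^ 2 : ℝ) : 𝕜) = ((‖V.starProjection x‖ ^ 2 : ℝ) : 𝕜) :=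
    calc ((∑ j ∈ s, ‖⟪g j, x⟫_𝕜‖ ^ 2 : ℝ) : 𝕜)
        = ⟪x, ∑ j ∈ s, ⟪g j, x⟫_𝕜 • g j⟫_𝕜 := by
          push_cast
          rw [inner_sum]
          refine Finset.sum_congr rfl fun j _ => ?_
          rw [inner_smul_right, ← inner_conj_symm x (g j), RCLike.mul_conj]
      _ = ⟪V.starProjection x, V.starProjection x⟫_𝕜 := by
          rw [h.sum_inner_smul, V.inner_starProjection_left_eq_right,
            Submodule.starProjection_eq_self_iff.2 (V.starProjection_apply_mem x)]
      _ = ((‖V.starProjection x‖ ^ 2 : ℝ) : 𝕜) := by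
          rw [inner_self_eq_norm_sq_to_K]; push_cast; rfl
  exact_mod_cast key

theorem mem (h : IsParsevalFrame V s g) {j : ι} (hj : j ∈ s) : g j ∈ V := by
  rw [← Submodule.orthogonal_orthogonal V, Submodule.mem_orthogonal]
  intro z hz
  have hsum : ∑ i ∈ s, ‖⟪g i, z⟫_𝕜‖ ^ 2 = 0 := by
    rw [h.sum_norm_inner_sq, (Submodule.starProjection_apply_eq_zero_iff _).2 hz, norm_zero,
      sq, mul_zero]
  have hj0 := (Finset.sum_eq_zero_iff_of_nonneg (fun i _ => by positivity)).1 hsum j hj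
  rw [inner_eq_zero_symm]
  simpa using hj0

theorem update_of_notMem [DecidableEq ι] (h : IsParsevalFrame V s g) {K : ι} (hK : K ∉ s)
    (v : E) : IsParsevalFrame V s (Function.update g K v) := by
  unfold IsParsevalFrame at h ⊢
  rw [← h]
  refine Finset.sum_congr rfl fun j hj => ?_
  rw [Function.update_of_ne (ne_of_mem_of_not_mem hj hK)]

theorem insert_of_eq_zero [DecidableEq ι] (h : IsParsevalFrame V s g) {K : ι} (hK : K ∉ s)
    (hgK : g K = 0) : IsParsevalFrame V (insert K s) g := by
  unfold IsParsevalFrame at h ⊢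
  simp [Finset.sum_insert hK, hgK, h]

theorem insert_of_mem_orthogonal [DecidableEq ι] (h : IsParsevalFrame V s g) {K : ι}
    (hK : K ∉ s) (hgK : g K ∈ Vᗮ) (hgK1 : ‖g K‖ = 1) :
    IsParsevalFrame (V ⊔ 𝕜 ∙ g K) (insert K s) g := by
  unfold IsParsevalFrame at h ⊢
  rw [Finset.sum_insert hK, h, Submodule.starProjection_sup_span_singleton hgK hgK1, add_comm]

theorem insert_of_mem [DecidableEq ι] (h : IsParsevalFrame V s g) {K : ι} (hK : K ∉ s)
    {v : E} (hv : v ∈ V) {c d : ℝ} (hcd : 2 * c + c ^ 2 * ‖v‖ ^ 2 + d ^ 2 = 0) {g' : ι → E}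
    (hg' : ∀ j ∈ s, g' j = g j + (c : 𝕜) • ⟪v, g j⟫_𝕜 • v) (hg'K : g' K = (d : 𝕜) • v) :
    IsParsevalFrame V (insert K s) g' := by
  have : CompleteSpace E := FiniteDimensional.complete 𝕜 E
  -- the new vectors are `T (g j)`, so the new frame operator is
  -- `T P T + d² R = P + (2c + c²‖v‖² + d²) R`
  set R := rankOne 𝕜 v v
  set T : E →L[𝕜] E := 1 + (c : 𝕜) • R
  have hT : ContinuousLinearMap.adjoint T = T := by
    simp [T, R, map_smulₛₗ, ContinuousLinearMap.adjoint_one]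
  have hTg : ∀ j ∈ s, g' j = T (g j) := fun j hj => by simp [hg' j hj, T, R]
  have hconj : ∀ x, rankOne 𝕜 (T x) (T x) = T * rankOne 𝕜 x x * T := fun x => by
    rw [ContinuousLinearMap.mul_def, ContinuousLinearMap.mul_def, ContinuousLinearMap.comp_assoc,
      InnerProductSpace.rankOne_comp, InnerProductSpace.comp_rankOne, hT]
  have hPR : V.starProjection * R = R := by
    rw [ContinuousLinearMap.mul_def, InnerProductSpace.comp_rankOne,
      Submodule.starProjection_eq_self_iff.2 hv]
  have hRP : R * V.starProjection = R := by
    rw [ContinuousLinearMap.mul_def, InnerProductSpace.rankOne_comp,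
      (isSelfAdjoint_starProjection V).adjoint_eq, Submodule.starProjection_eq_self_iff.2 hv]
  have hRR : R * R = ((‖v‖ ^ 2 : ℝ) : 𝕜) • R := by
    rw [ContinuousLinearMap.mul_def, InnerProductSpace.rankOne_comp_rankOne,
      inner_self_eq_norm_sq_to_K]
    push_cast; rfl
  have hRd : rankOne 𝕜 ((d : 𝕜) • v) ((d : 𝕜) • v) = ((d ^ 2 : ℝ) : 𝕜) • R := by
    simp [R, smul_smul, sq]
  have hcoef : ((2 * c + c ^ 2 * ‖v‖ ^ 2 + d ^ 2 : ℝ) : 𝕜) = 0 := by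
    rw [hcd]; simp
  unfold IsParsevalFrame at h ⊢
  rw [Finset.sum_insert hK, hg'K, Finset.sum_congr rfl fun j hj => by rw [hTg j hj, hconj],
    ← Finset.sum_mul, ← Finset.mul_sum, h, hRd]
  simp only [T, add_mul, mul_add, one_mul, mul_one, smul_mul_assoc, mul_smul_comm, hPR, hRP,
    hRR, smul_smul]
  push_cast at hcoef ⊢
  linear_combination (norm := module) hcoef • R

end IsParsevalFrame

end ParsevalFrame

section

variable {H : Type*} [NormedAddCommGroup H] [InnerProductSpace ℂ H] {N : ℕ}

noncomputable def ggspPartial (f : Fin N → H) (k : ℕ) : Fin N → H :=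
  ((List.finRange N).take k).foldl (fun g j => ggspStep j (f j) g) f

theorem ggspPartial_succ (f : Fin N → H) {k : ℕ} (hk : k < N) :
    ggspPartial f (k + 1) = ggspStep ⟨k, hk⟩ (f ⟨k, hk⟩) (ggspPartial f k) := by
  rw [ggspPartial, List.take_add_one, List.getElem?_eq_getElem (by simpa using hk),
    List.foldl_append]
  simp [ggspPartial]

theorem ggsp_eq_ggspPartial (f : Fin N → H) : GGSP f = ggspPartial f N := by
  rw [GGSP, ggspPartial, List.take_of_length_le (by simp)]

end

section

variable {H : Type*} [NormedAddCommGroup H] [InnerProductSpace ℂ H] [FiniteDimensional ℂ H]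
  {N n : ℕ}

theorem Submodule.inv_norm_smul_sub_starProjection_mem_orthogonal (V : Submodule ℂ H) (v : H) :
    ‖v - V.starProjection v‖⁻¹ • (v - V.starProjection v) ∈ Vᗮ :=
  Submodule.smul_of_tower_mem _ _ (V.sub_starProjection_mem_orthogonal v)

theorem Submodule.norm_inv_norm_smul_sub_starProjection {V : Submodule ℂ H} {v : H}
    (hv : v ∉ V) : ‖‖v - V.starProjection v‖⁻¹ • (v - V.starProjection v)‖ = 1 :=
  norm_smul_inv_norm (𝕜 := ℝ) (Submodule.sub_starProjection_ne_zero hv)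

theorem ggspStep_of_notMem {V : Submodule ℂ H} {g : Fin N → H} {K : Fin N} {v : H}
    (hg : IsParsevalFrame V (Iio K) g) (hv : v ∉ V) :
    ggspStep K v g =
      Function.update g K (‖v - V.starProjection v‖⁻¹ • (v - V.starProjection v)) := by
  have hv0 : v ≠ 0 := fun h => hv (h ▸ V.zero_mem)
  rw [ggspStep, if_neg hv0]
  dsimp only
  rw [Finset.filter_gt_eq_Iio, hg.sum_inner_smul,
    if_neg (Submodule.sub_starProjection_ne_zero hv)]

theorem isParsevalFrame_ggspStep_of_mem {V : Submodule ℂ H} {g : Fin N → H} {K : Fin N} {v : H}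
    (hg : IsParsevalFrame V (Iio K) g) (hv : v ∈ V) :
    IsParsevalFrame V (Iic K) (ggspStep K v g) := by
  rw [← Finset.Iio_insert]
  by_cases hv0 : v = 0
  · rw [ggspStep, if_pos hv0]
    exact (hg.update_of_notMem notMem_Iio_self 0).insert_of_eq_zero notMem_Iio_self
      (Function.update_self ..)
  set c : ℝ := 1 / ‖v‖ ^ 2 * (1 / √(1 + ‖v‖ ^ 2) - 1)
  set d : ℝ := (√(1 + ‖v‖ ^ 2))⁻¹
  have hstep : ggspStep K v g = fun i =>
      if i < K then g i + c • (⟪v, g i⟫ • v) else if i = K then d • v else g i := by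
    rw [ggspStep, if_neg hv0]
    refine if_pos ?_
    rw [Finset.filter_gt_eq_Iio, hg.sum_inner_smul, Submodule.starProjection_eq_self_iff.2 hv,
      sub_self]
  -- because `(1 + c ‖v‖²)² = d² = 1 / (1 + ‖v‖²)`
  have hcd : 2 * c + c ^ 2 * ‖v‖ ^ 2 + d ^ 2 = 0 := by
    have hr : √(1 + ‖v‖ ^ 2) ^ 2 = 1 + ‖v‖ ^ 2 := Real.sq_sqrt (by positivity)
    have ha : 0 < ‖v‖ ^ 2 := by positivity
    have hr0 : 0 < √(1 + ‖v‖ ^ 2) := by positivity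
    simp only [c, d]
    generalize √(1 + ‖v‖ ^ 2) = r at hr hr0 ⊢
    generalize ‖v‖ ^ 2 = a at hr ha ⊢
    field_simp
    linear_combination -hr
  refine hg.insert_of_mem notMem_Iio_self hv hcd (fun j hj => ?_) ?_
  · simp [hstep, Finset.mem_Iio.1 hj, Complex.coe_smul]
  · simp [hstep, Complex.coe_smul]

theorem isParsevalFrame_ggspStep {V : Submodule ℂ H} {g : Fin N → H} {K : Fin N} {v : H}
    (hg : IsParsevalFrame V (Iio K) g) :
    IsParsevalFrame (V ⊔ ℂ ∙ v) (Iic K) (ggspStep K v g) := by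
  by_cases hv : v ∈ V
  · rw [sup_eq_left.2 ((Submodule.span_singleton_le_iff_mem _ _).2 hv)]
    exact isParsevalFrame_ggspStep_of_mem hg hv
  set u := v - V.starProjection v
  have hspan : ℂ ∙ (‖u‖⁻¹ • u) = ℂ ∙ u := by
    rw [← Complex.coe_smul]
    exact Submodule.span_singleton_smul_eq (by simp [u, Submodule.sub_starProjection_ne_zero hv]) _
  have := (hg.update_of_notMem notMem_Iio_self _).insert_of_mem_orthogonal notMem_Iio_self
    (by simpa using V.inv_norm_smul_sub_starProjection_mem_orthogonal v)
    (by simpa using Submodule.norm_inv_norm_smul_sub_starProjection hv)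
  rwa [Function.update_self, hspan, V.sup_span_singleton_sub_starProjection,
    ← ggspStep_of_notMem hg hv, Finset.Iio_insert] at this

theorem isParsevalFrame_ggspPartial (f : Fin N → H) {k : ℕ} (hk : k ≤ N) :
    IsParsevalFrame (Submodule.span ℂ (f '' {j | (j : ℕ) < k}))
      ({j | (j : ℕ) < k} : Finset (Fin N)) (ggspPartial f k) := by
  induction k with
  | zero => simp [IsParsevalFrame, Submodule.starProjection_bot]
  | succ k ih =>
    have hk' : k < N := hk
    have hIio : Iio (⟨k, hk'⟩ : Fin N) = ({j | (j : ℕ) < k} : Finset (Fin N)) := by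
      ext; simp [Fin.lt_def]
    have hIic : Iic (⟨k, hk'⟩ : Fin N) = ({j | (j : ℕ) < k + 1} : Finset (Fin N)) := by
      ext; simp [Fin.le_def]
    have hspan : Submodule.span ℂ (f '' {j | (j : ℕ) < k + 1}) =
        Submodule.span ℂ (f '' {j | (j : ℕ) < k}) ⊔ ℂ ∙ f ⟨k, hk'⟩ := by
      rw [show {j : Fin N | (j : ℕ) < k + 1} = insert ⟨k, hk'⟩ {j : Fin N | (j : ℕ) < k} by
          ext; simp [Fin.ext_iff, le_iff_eq_or_lt],
        Set.image_insert_eq, Submodule.span_insert, sup_comm]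
    rw [ggspPartial_succ f hk', ← hIic, hspan]
    exact isParsevalFrame_ggspStep (hIio ▸ ih hk'.le)

theorem isParsevalFrame_ggspPartial_init (f : Fin (n + 1) → H) :
    IsParsevalFrame (Submodule.span ℂ (Set.range (Fin.init f))) (Iio (Fin.last n))
      (ggspPartial f n) := by
  have hIio : Iio (Fin.last n) = ({j | (j : ℕ) < n} : Finset (Fin (n + 1))) := by
    ext j
    simp only [Finset.mem_Iio, Finset.mem_filter, Finset.mem_univ, true_and, Fin.lt_def,
      Fin.val_last]
  have hrange : Set.range (Fin.init f) = f '' {j | (j : ℕ) < n} := by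
    rw [← Fin.range_castSucc, ← Set.range_comp]
    rfl
  rw [hIio, hrange]
  exact isParsevalFrame_ggspPartial f n.le_succ

theorem ggsp_eq_update_of_notMem {f : Fin (n + 1) → H} {W : Submodule ℂ H}
    (hW : W = Submodule.span ℂ (Set.range (Fin.init f))) (hlast : f (Fin.last n) ∉ W) :
    GGSP f = Function.update (ggspPartial f n) (Fin.last n)
      (‖f (Fin.last n) - W.starProjection (f (Fin.last n))‖⁻¹ •
        (f (Fin.last n) - W.starProjection (f (Fin.last n)))) := by
  subst hW
  rw [ggsp_eq_ggspPartial, ggspPartial_succ f n.lt_succ_self]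
  exact ggspStep_of_notMem (isParsevalFrame_ggspPartial_init f) hlast

theorem ggsp_last_of_notMem {f : Fin (n + 1) → H} {W : Submodule ℂ H}
    (hW : W = Submodule.span ℂ (Set.range (Fin.init f))) (hlast : f (Fin.last n) ∉ W) :
    GGSP f (Fin.last n) = ‖f (Fin.last n) - W.starProjection (f (Fin.last n))‖⁻¹ •
      (f (Fin.last n) - W.starProjection (f (Fin.last n))) := by
  rw [ggsp_eq_update_of_notMem hW hlast, Function.update_self]

theorem ggsp_init_mem_of_notMem {f : Fin (n + 1) → H} {W : Submodule ℂ H}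
    (hW : W = Submodule.span ℂ (Set.range (Fin.init f))) (hlast : f (Fin.last n) ∉ W)
    (i : Fin n) : Fin.init (GGSP f) i ∈ W := by
  rw [Fin.init, ggsp_eq_update_of_notMem hW hlast,
    Function.update_of_ne (Fin.castSucc_ne_last i), hW]
  exact (isParsevalFrame_ggspPartial_init f).mem (Finset.mem_Iio.2 (Fin.castSucc_lt_last i))

theorem mapsTo_ggsp {W : Submodule ℂ H} {e : H} (he : e ∈ Wᗮ) (he1 : ‖e‖ = 1) :
    Set.MapsTo GGSP {g : Fin (n + 1) → H | (∀ i, Fin.init g i ∈ W) ∧ g (Fin.last n) = e}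
      {g | (∀ i, Fin.init g i ∈ W) ∧ g (Fin.last n) = e} := by
  rintro g ⟨hinit, rfl⟩
  have hle : Submodule.span ℂ (Set.range (Fin.init g)) ≤ W :=
    Submodule.span_le.2 (Set.range_subset_iff.2 hinit)
  have he' := Submodule.orthogonal_le hle he
  have hnot : g (Fin.last n) ∉ Submodule.span ℂ (Set.range (Fin.init g)) := fun hmem => by
    have h0 := Submodule.mem_inf.2 ⟨hmem, he'⟩
    rw [Submodule.inf_orthogonal_eq_bot, Submodule.mem_bot] at h0
    simp [h0] at he1
  refine ⟨fun i => hle (ggsp_init_mem_of_notMem rfl hnot i), ?_⟩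
  rw [ggsp_last_of_notMem rfl hnot, (Submodule.starProjection_apply_eq_zero_iff _).2 he',
    sub_zero, he1, inv_one, one_smul]

end

theorem ggsp_iterate_last_stabilizes_general {H : Type*} [NormedAddCommGroup H]
    [InnerProductSpace ℂ H] [FiniteDimensional ℂ H] {n : ℕ} (f : Fin (n + 1) → H)
    (W : Submodule ℂ H)
    (hW : W = Submodule.span ℂ (Set.range fun i : Fin n => f i.castSucc))
    (hlast : f (Fin.last n) ∉ W) :
    ∀ m : ℕ, 1 ≤ m →
      (GGSP^[m] f) (Fin.last n) =
        ‖f (Fin.last n) - (W.orthogonalProjection (f (Fin.last n)) : H)‖⁻¹ •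
          (f (Fin.last n) - (W.orthogonalProjection (f (Fin.last n)) : H)) := by
  intro m hm
  obtain ⟨k, rfl⟩ := Nat.exists_eq_add_of_le' hm
  rw [Function.iterate_succ_apply]
  exact ((mapsTo_ggsp (W.inv_norm_smul_sub_starProjection_mem_orthogonal _)
    (Submodule.norm_inv_norm_smul_sub_starProjection hlast)).iterate k
    ⟨ggsp_init_mem_of_notMem hW hlast, ggsp_last_of_notMem hW hlast⟩).2

/-- If the last frame vector is not in the span of the preceding ones, then from the
first iteration on, the last vector of `Φ^m f` is constantly `α (I - P) fₙ`. -/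
theorem ggsp_iterate_last_stabilizes {H : Type*} [NormedAddCommGroup H]
    [InnerProductSpace ℂ H] [FiniteDimensional ℂ H] {n : ℕ} (f : Fin (n + 1) → H)
    (hf : IsFrame f)
    (W : Submodule ℂ H)
    (hW : W = Submodule.span ℂ (Set.range fun i : Fin n => f i.castSucc))
    (hlast : f (Fin.last n) ∉ W) :
    ∀ m : ℕ, 1 ≤ m →
      (GGSP^[m] f) (Fin.last n) =
        ‖f (Fin.last n) - (W.orthogonalProjection (f (Fin.last n)) : H)‖⁻¹ •
          (f (Fin.last n) - (W.orthogonalProjection (f (Fin.last n)) : H)) :=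
  ggsp_iterate_last_stabilizes_general f W hW hlast
end

section
/- Let H be a finite-dimensional complex Hilbert space and let (f_1,…,f_n) be a frame for H. If f_k ∈ span{f_1,…,f_{k−1}}, then the k-th vector of the m-th iterate Φ^m(f_1,…,f_n) converges to zero in norm as m → ∞. -/
open scoped ComplexInnerProductSpace
open Finset Filter

/-!
After the first `k` steps of one pass of the GGSP, the processed vectors `g_0, …, g_{k-1}` form
a Parseval frame for `span {f_0, …, f_{k-1}}`. So if `f_k` lies in that span, its Gram–Schmidt
residual vanishes and the pass outputs `g_k = f_k / √(1 + ‖f_k‖²)`, which is the image of `f_k`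
under the same linear map that updates `g_0, …, g_{k-1}`; hence it stays in the span of its
predecessors. Every later step acts on the processed vectors by a single linear contraction,
which preserves this and does not increase `‖g_k‖`. Therefore `a_m = ‖(Φ^m f)_k‖` satisfies
`a_{m+1}² (1 + a_m²) ≤ a_m²`, and since `x ↦ x / (1 + x)` is increasing this forces
`a_{m+1}² ≤ 1 / (m + 1)`.
-/

section Scale

variable {E : Type*} [NormedAddCommGroup E]

noncomputable def ggspScale (v : E) : ℝ := (Real.sqrt (1 + ‖v‖ ^ 2))⁻¹

noncomputable def ggspCoeff (v : E) : ℝ := (1 / ‖v‖ ^ 2) * (1 / Real.sqrt (1 + ‖v‖ ^ 2) - 1)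

lemma ggspScale_pos (v : E) : 0 < ggspScale v := by unfold ggspScale; positivity

lemma ggspScale_sq_mul (v : E) : ggspScale v ^ 2 * (1 + ‖v‖ ^ 2) = 1 := by
  rw [ggspScale, inv_pow, Real.sq_sqrt (by positivity), inv_mul_cancel₀ (by positivity)]

lemma ggspCoeff_mul_norm_sq {v : E} (hv : v ≠ 0) : ggspCoeff v * ‖v‖ ^ 2 = ggspScale v - 1 := by
  have : ‖v‖ ≠ 0 := norm_ne_zero_iff.2 hv
  rw [ggspCoeff, ggspScale, one_div (Real.sqrt _)]
  field_simp

lemma ggspCoeff_mul_one_add_ggspScale {v : E} (hv : v ≠ 0) :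
    ggspCoeff v * (1 + ggspScale v) = -ggspScale v ^ 2 := by
  have hpos : 0 < ‖v‖ ^ 2 := by positivity
  refine mul_right_cancel₀ hpos.ne' ?_
  linear_combination (1 + ggspScale v) * ggspCoeff_mul_norm_sq hv + ggspScale_sq_mul v

end Scale

section Correction

variable {H : Type*} [NormedAddCommGroup H] [InnerProductSpace ℂ H]

/-- The update of `g_i`, `i < k`, in the dependent case of `ggspStep`: it fixes `vᗮ` and
multiplies `v` by `ggspScale v`. -/
noncomputable def ggspCorrection (v : H) : H →ₗ[ℂ] H where
  toFun x := x + ggspCoeff v • (⟪v, x⟫ • v)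
  map_add' x y := by simp only [inner_add_right, add_smul, smul_add]; abel
  map_smul' z x := by
    simp only [inner_smul_right, mul_smul, smul_add, RingHom.id_apply, smul_comm (ggspCoeff v) z]

lemma ggspCorrection_apply (v x : H) :
    ggspCorrection v x = x + ((ggspCoeff v : ℂ) * ⟪v, x⟫) • v := by
  rw [mul_smul, Complex.coe_smul]
  rfl

lemma inner_self_eq_ofReal_norm_sq (v : H) : ⟪v, v⟫ = ((‖v‖ ^ 2 : ℝ) : ℂ) := by
  rw [inner_self_eq_norm_sq_to_K]; norm_cast

lemma ggspCorrection_self {v : H} (hv : v ≠ 0) : ggspCorrection v v = ggspScale v • v := by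
  rw [ggspCorrection_apply, inner_self_eq_ofReal_norm_sq, ← Complex.coe_smul]
  have h : ((ggspCoeff v * ‖v‖ ^ 2 : ℝ) : ℂ) = ((ggspScale v - 1 : ℝ) : ℂ) := by
    rw [ggspCoeff_mul_norm_sq hv]
  push_cast at h
  linear_combination (norm := module) h • v

lemma ggspCorrection_isSymmetric (v : H) : (ggspCorrection v).IsSymmetric := by
  intro x y
  simp only [ggspCorrection_apply, inner_add_left, inner_add_right, inner_smul_left,
    inner_smul_right, map_mul, Complex.conj_ofReal, inner_conj_symm]
  ring

lemma ggspCorrection_ggspCorrection_add {v : H} (hv : v ≠ 0) (x : H) :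
    ggspCorrection v (ggspCorrection v x) + ⟪ggspScale v • v, x⟫ • ggspScale v • v = x := by
  have h : ((ggspCoeff v * (1 + ggspScale v) : ℝ) : ℂ) = ((-ggspScale v ^ 2 : ℝ) : ℂ) := by
    rw [ggspCoeff_mul_one_add_ggspScale hv]
  have hs : ((ggspCoeff v * ‖v‖ ^ 2 : ℝ) : ℂ) = ((ggspScale v - 1 : ℝ) : ℂ) := by
    rw [ggspCoeff_mul_norm_sq hv]
  push_cast at h hs
  simp only [ggspCorrection_apply, inner_add_right, inner_smul_right, inner_self_eq_ofReal_norm_sq,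
    ← Complex.coe_smul, inner_smul_left, Complex.conj_ofReal]
  push_cast
  linear_combination (norm := module) (⟪v, x⟫ * h + ggspCoeff v * ⟪v, x⟫ * hs) • v

lemma norm_ggspCorrection_sq_add {v : H} (hv : v ≠ 0) (x : H) :
    ‖ggspCorrection v x‖ ^ 2 + ‖⟪ggspScale v • v, x⟫‖ ^ 2 = ‖x‖ ^ 2 := by
  have h := congrArg (⟪x, ·⟫) (ggspCorrection_ggspCorrection_add hv x)
  simp only [inner_add_right, inner_smul_right, ← ggspCorrection_isSymmetric v x,
    ← inner_conj_symm x (ggspScale v • v), RCLike.mul_conj, inner_self_eq_norm_sq_to_K] at h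
  exact_mod_cast h

lemma norm_ggspCorrection_le {v : H} (hv : v ≠ 0) (x : H) : ‖ggspCorrection v x‖ ≤ ‖x‖ := by
  refine (pow_le_pow_iff_left₀ (norm_nonneg _) (norm_nonneg _) two_ne_zero).1 ?_
  rw [← norm_ggspCorrection_sq_add hv x]
  exact le_add_of_nonneg_right (sq_nonneg _)

lemma ggspCorrection_mem {W : Submodule ℂ H} {v x : H} (hv : v ∈ W) (hx : x ∈ W) :
    ggspCorrection v x ∈ W := by
  rw [ggspCorrection_apply]
  exact W.add_mem hx (W.smul_mem _ hv)

end Correction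

section Prefix

variable {H : Type*} [NormedAddCommGroup H] [InnerProductSpace ℂ H] {n : ℕ}

noncomputable def prefixFrameOp (g : Fin n → H) (j : ℕ) (x : H) : H :=
  ∑ i ∈ univ.filter (fun i : Fin n => (i : ℕ) < j), ⟪g i, x⟫ • g i

def prefixSpan (g : Fin n → H) (j : ℕ) : Submodule ℂ H :=
  Submodule.span ℂ (g '' {i | (i : ℕ) < j})

def IsParsevalPrefix (g : Fin n → H) (j : ℕ) : Prop :=
  ∀ x ∈ prefixSpan g j, prefixFrameOp g j x = x

lemma mem_prefixSpan (g : Fin n → H) {j : ℕ} {i : Fin n} (h : (i : ℕ) < j) :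
    g i ∈ prefixSpan g j :=
  Submodule.subset_span ⟨i, h, rfl⟩

lemma prefixFrameOp_mem_prefixSpan (g : Fin n → H) (j : ℕ) (x : H) :
    prefixFrameOp g j x ∈ prefixSpan g j :=
  Submodule.sum_mem _ fun _ hi => Submodule.smul_mem _ _ (mem_prefixSpan g (mem_filter.1 hi).2)

lemma prefixFrameOp_congr {g₁ g₂ : Fin n → H} {j : ℕ}
    (h : ∀ i : Fin n, (i : ℕ) < j → g₁ i = g₂ i) : prefixFrameOp g₁ j = prefixFrameOp g₂ j := by
  funext x
  exact sum_congr rfl fun i hi => by rw [h i (mem_filter.1 hi).2]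

lemma prefixFrameOp_succ (g : Fin n → H) (k : Fin n) (x : H) :
    prefixFrameOp g (k + 1) x = prefixFrameOp g k x + ⟪g k, x⟫ • g k := by
  have : univ.filter (fun i : Fin n => (i : ℕ) < k + 1) =
      insert k (univ.filter fun i : Fin n => (i : ℕ) < k) := by
    ext i
    simp only [mem_filter, mem_insert, mem_univ, true_and, Fin.ext_iff]
    omega
  rw [prefixFrameOp, this, sum_insert (by simp), add_comm]
  rfl

lemma prefixSpan_succ (g : Fin n → H) (k : Fin n) :
    prefixSpan g (k + 1) = prefixSpan g k ⊔ Submodule.span ℂ {g k} := by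
  have : {i : Fin n | (i : ℕ) < k + 1} = {i : Fin n | (i : ℕ) < k} ∪ {k} := by
    ext i
    simp only [Set.mem_ofPred_eq, Set.mem_union, Set.mem_singleton_iff, Fin.ext_iff]
    omega
  rw [prefixSpan, this, Set.image_union, Set.image_singleton, Submodule.span_union]
  rfl

lemma inner_prefixFrameOp_left (g : Fin n → H) (j : ℕ) (x y : H) :
    ⟪prefixFrameOp g j x, y⟫ = ⟪x, prefixFrameOp g j y⟫ := by
  simp only [prefixFrameOp, sum_inner, inner_sum, inner_smul_left, inner_smul_right,
    inner_conj_symm]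
  exact sum_congr rfl fun i _ => mul_comm _ _

lemma prefixFrameOp_map_of_isSymmetric {A : H →ₗ[ℂ] H} (hA : A.IsSymmetric) (g : Fin n → H)
    (j : ℕ) (x : H) : prefixFrameOp (fun i => A (g i)) j x = A (prefixFrameOp g j (A x)) := by
  simp only [prefixFrameOp, map_sum, map_smul, hA _ x]

lemma prefixFrameOp_add_of_inner_eq_zero {g : Fin n → H} {j : ℕ} (x : H) {z : H}
    (hz : ∀ i : Fin n, (i : ℕ) < j → ⟪g i, z⟫ = 0) :
    prefixFrameOp g j (x + z) = prefixFrameOp g j x :=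
  sum_congr rfl fun i hi => by rw [inner_add_right, hz i (mem_filter.1 hi).2, add_zero]

lemma IsParsevalPrefix.inner_sub_prefixFrameOp_eq_zero {g : Fin n → H} {j : ℕ}
    (hP : IsParsevalPrefix g j) {x : H} (hx : x ∈ prefixSpan g j) (v : H) :
    ⟪x, v - prefixFrameOp g j v⟫ = 0 := by
  rw [inner_sub_right, ← inner_prefixFrameOp_left, hP x hx, sub_self]

lemma isParsevalPrefix_succ_of_forall {g : Fin n → H} {k : Fin n} (U : Submodule ℂ H)
    (hlt : ∀ i : Fin n, (i : ℕ) < k → g i ∈ U) (hk : g k ∈ U)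
    (hS : ∀ x ∈ U, prefixFrameOp g k x + ⟪g k, x⟫ • g k = x) :
    IsParsevalPrefix g (k + 1) ∧ prefixSpan g (k + 1) = U := by
  have hspan : prefixSpan g (k + 1) = U := by
    refine le_antisymm (Submodule.span_le.2 ?_) fun x hx => ?_
    · rintro _ ⟨i, hi, rfl⟩
      rcases Nat.lt_succ_iff_lt_or_eq.1 hi with hi | hi
      · exact hlt i hi
      · exact Fin.ext hi ▸ hk
    · rw [← hS x hx, ← prefixFrameOp_succ]
      exact prefixFrameOp_mem_prefixSpan g _ x
  refine ⟨fun x hx => ?_, hspan⟩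
  rw [prefixFrameOp_succ]
  exact hS x (hspan ▸ hx)

lemma map_mem_prefixSpan {g g' : Fin n → H} {j : ℕ} (A : H →ₗ[ℂ] H)
    (hA : ∀ i : Fin n, (i : ℕ) < j → g' i = A (g i)) {x : H} (hx : x ∈ prefixSpan g j) :
    A x ∈ prefixSpan g' j := by
  have := Submodule.apply_mem_span_image_of_mem_span A hx
  rwa [Set.image_image,
    Set.image_congr (s := {i : Fin n | (i : ℕ) < j}) fun i hi => (hA i hi).symm] at this

end Prefix

section Step

variable {H : Type*} [NormedAddCommGroup H] [InnerProductSpace ℂ H] {n : ℕ}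

lemma ggspStep_zero (k : Fin n) (g : Fin n → H) : ggspStep k 0 g = Function.update g k 0 :=
  if_pos rfl

lemma ggspStep_of_residual_eq_zero {k : Fin n} {v : H} (g : Fin n → H) (hv : v ≠ 0)
    (hu : v - prefixFrameOp g k v = 0) :
    ggspStep k v g = fun i =>
      if i < k then ggspCorrection v (g i) else if i = k then ggspScale v • v else g i := by
  unfold ggspStep
  rw [if_neg hv]
  exact if_pos hu

lemma ggspStep_of_residual_ne_zero {k : Fin n} {v : H} (g : Fin n → H) (hv : v ≠ 0)
    (hu : v - prefixFrameOp g k v ≠ 0) :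
    ggspStep k v g = Function.update g k
      (‖v - prefixFrameOp g k v‖⁻¹ • (v - prefixFrameOp g k v)) := by
  unfold ggspStep
  rw [if_neg hv]
  exact if_neg hu

lemma IsParsevalPrefix.ggspStep_succ_of_eq_zero {g : Fin n → H} {k : Fin n}
    (hP : IsParsevalPrefix g k) :
    IsParsevalPrefix (ggspStep k 0 g) (k + 1) ∧
      prefixSpan (ggspStep k 0 g) (k + 1) = prefixSpan g k := by
  have hlt : ∀ i : Fin n, (i : ℕ) < k → Function.update g k 0 i = g i := fun i hi =>
    Function.update_of_ne (Fin.ne_of_lt hi) _ _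
  rw [ggspStep_zero]
  refine isParsevalPrefix_succ_of_forall _
    (fun i hi => by rw [hlt i hi]; exact mem_prefixSpan g hi) (by simp) fun x hx => ?_
  rw [prefixFrameOp_congr hlt, Function.update_self, smul_zero, add_zero, hP x hx]

lemma IsParsevalPrefix.ggspStep_succ_of_mem {g : Fin n → H} {k : Fin n} {v : H}
    (hP : IsParsevalPrefix g k) (hv : v ≠ 0) (hvW : v ∈ prefixSpan g k) :
    IsParsevalPrefix (ggspStep k v g) (k + 1) ∧
      prefixSpan (ggspStep k v g) (k + 1) = prefixSpan g k := by
  rw [ggspStep_of_residual_eq_zero g hv (by rw [hP v hvW, sub_self])]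
  have hlt : ∀ i : Fin n, (i : ℕ) < k → (if i < k then ggspCorrection v (g i)
      else if i = k then ggspScale v • v else g i) = ggspCorrection v (g i) := fun i hi =>
    if_pos hi
  refine isParsevalPrefix_succ_of_forall _
    (fun i hi => by rw [hlt i hi]; exact ggspCorrection_mem hvW (mem_prefixSpan g hi))
    (by simpa using Submodule.smul_of_tower_mem _ (ggspScale v) hvW) fun x hx => ?_
  rw [prefixFrameOp_congr hlt, prefixFrameOp_map_of_isSymmetric (ggspCorrection_isSymmetric v),
    hP _ (ggspCorrection_mem hvW hx)]
  simpa using ggspCorrection_ggspCorrection_add hv x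

lemma IsParsevalPrefix.ggspStep_succ_of_residual_ne_zero {g : Fin n → H} {k : Fin n} {v : H}
    (hP : IsParsevalPrefix g k) (hv : v ≠ 0) (hu : v - prefixFrameOp g k v ≠ 0) :
    IsParsevalPrefix (ggspStep k v g) (k + 1) ∧
      prefixSpan (ggspStep k v g) (k + 1) = prefixSpan g k ⊔ Submodule.span ℂ {v} := by
  rw [ggspStep_of_residual_ne_zero g hv hu]
  set W := prefixSpan g k
  set u := v - prefixFrameOp g k v
  set w := ‖u‖⁻¹ • u with hw_def
  have hlt : ∀ i : Fin n, (i : ℕ) < k → Function.update g k w i = g i := fun i hi =>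
    Function.update_of_ne (Fin.ne_of_lt hi) _ _
  have horth : ∀ y ∈ W, ⟪y, w⟫ = 0 := fun y hy => by
    rw [hw_def, inner_smul_right_eq_smul, hP.inner_sub_prefixFrameOp_eq_zero hy, smul_zero]
  have hw : ⟪w, w⟫ = 1 := by
    rw [inner_self_eq_norm_sq_to_K, hw_def, norm_smul, norm_inv, norm_norm,
      inv_mul_cancel₀ (norm_ne_zero_iff.2 hu)]
    simp
  have hvw : v = prefixFrameOp g k v + ‖u‖ • w := by
    rw [hw_def, smul_inv_smul₀ (norm_ne_zero_iff.2 hu), add_sub_cancel]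
  refine isParsevalPrefix_succ_of_forall _
    (fun i hi => by rw [hlt i hi]; exact Submodule.mem_sup_left (mem_prefixSpan g hi)) ?_
    fun x hx => ?_
  · rw [Function.update_self]
    exact Submodule.smul_of_tower_mem _ _ (Submodule.sub_mem _ (Submodule.mem_sup_right
      (Submodule.mem_span_singleton_self v)) (Submodule.mem_sup_left
      (prefixFrameOp_mem_prefixSpan g k v)))
  · have hx' : x ∈ W ⊔ Submodule.span ℂ {w} := by
      refine (sup_le le_sup_left ?_ : W ⊔ Submodule.span ℂ {v} ≤ _) hx
      rw [Submodule.span_singleton_le_iff_mem, hvw]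
      exact Submodule.add_mem _ (Submodule.mem_sup_left (prefixFrameOp_mem_prefixSpan g k v))
        (Submodule.smul_of_tower_mem _ _
          (Submodule.mem_sup_right (Submodule.mem_span_singleton_self w)))
    obtain ⟨y, hy, _, hz, rfl⟩ := Submodule.mem_sup.1 hx'
    obtain ⟨t, rfl⟩ := Submodule.mem_span_singleton.1 hz
    rw [prefixFrameOp_congr hlt, Function.update_self,
      prefixFrameOp_add_of_inner_eq_zero y fun i hi => by
        rw [inner_smul_right, horth _ (mem_prefixSpan g hi), mul_zero],
      hP y hy, inner_add_right, inner_smul_right, hw, inner_eq_zero_symm.1 (horth y hy),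
      zero_add, mul_one]

lemma IsParsevalPrefix.ggspStep_succ {g : Fin n → H} {k : Fin n} (hP : IsParsevalPrefix g k)
    (v : H) :
    IsParsevalPrefix (ggspStep k v g) (k + 1) ∧
      prefixSpan (ggspStep k v g) (k + 1) = prefixSpan g k ⊔ Submodule.span ℂ {v} := by
  by_cases hv : v = 0
  · subst hv
    simpa using hP.ggspStep_succ_of_eq_zero
  by_cases hu : v - prefixFrameOp g k v = 0
  · have hvW : v ∈ prefixSpan g k := sub_eq_zero.1 hu ▸ prefixFrameOp_mem_prefixSpan g k v
    rw [sup_eq_left.2 ((Submodule.span_singleton_le_iff_mem _ _).2 hvW)]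
    exact hP.ggspStep_succ_of_mem hv hvW
  · exact hP.ggspStep_succ_of_residual_ne_zero hv hu

lemma IsParsevalPrefix.ggspStep_self_of_mem {g : Fin n → H} {k : Fin n} {v : H}
    (hP : IsParsevalPrefix g k) (hvW : v ∈ prefixSpan g k) :
    ggspStep k v g k ∈ prefixSpan (ggspStep k v g) k ∧
      ‖ggspStep k v g k‖ = ‖v‖ * ggspScale v := by
  by_cases hv : v = 0
  · subst hv
    simp [ggspStep_zero]
  rw [ggspStep_of_residual_eq_zero g hv (by rw [hP v hvW, sub_self])]
  simp only [lt_irrefl, if_false, if_true]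
  refine ⟨?_, by rw [norm_smul, Real.norm_of_nonneg (ggspScale_pos v).le, mul_comm]⟩
  rw [← ggspCorrection_self hv]
  exact map_mem_prefixSpan _ (fun i hi => if_pos hi) hvW

lemma exists_contraction_ggspStep_of_lt (g : Fin n → H) (l : Fin n) (v : H) :
    ∃ A : H →ₗ[ℂ] H, (∀ x, ‖A x‖ ≤ ‖x‖) ∧
      ∀ i : Fin n, i < l → ggspStep l v g i = A (g i) := by
  by_cases hv : v = 0
  · subst hv
    exact ⟨LinearMap.id, fun _ => le_rfl, fun i hi => by
      rw [ggspStep_zero, Function.update_of_ne (Fin.ne_of_lt hi)]; rfl⟩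
  by_cases hu : v - prefixFrameOp g l v = 0
  · exact ⟨ggspCorrection v, norm_ggspCorrection_le hv, fun i hi => by
      rw [ggspStep_of_residual_eq_zero g hv hu]; exact if_pos hi⟩
  · exact ⟨LinearMap.id, fun _ => le_rfl, fun i hi => by
      rw [ggspStep_of_residual_ne_zero g hv hu, Function.update_of_ne (Fin.ne_of_lt hi)]; rfl⟩

lemma ggspStep_apply_mem_prefixSpan_and_norm_le_of_lt {g : Fin n → H} {k l : Fin n}
    (hkl : k < l) (v : H) (h : g k ∈ prefixSpan g k) :
    ggspStep l v g k ∈ prefixSpan (ggspStep l v g) k ∧ ‖ggspStep l v g k‖ ≤ ‖g k‖ := by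
  obtain ⟨A, hA, hAg⟩ := exists_contraction_ggspStep_of_lt g l v
  rw [hAg k hkl]
  exact ⟨map_mem_prefixSpan A (fun i hi => hAg i (lt_trans hi hkl)) h, hA _⟩

end Step

section Run

variable {H : Type*} [NormedAddCommGroup H] [InnerProductSpace ℂ H] {n : ℕ}

noncomputable def ggspRun (f : Fin n → H) (j : ℕ) : Fin n → H :=
  ((List.finRange n).take j).foldl (fun g k => ggspStep k (f k) g) f

lemma GGSP_eq_ggspRun (f : Fin n → H) : GGSP f = ggspRun f n := by
  rw [GGSP, ggspRun, List.take_of_length_le (by simp)]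

lemma ggspRun_succ (f : Fin n → H) {j : ℕ} (h : j < n) :
    ggspRun f (j + 1) = ggspStep ⟨j, h⟩ (f ⟨j, h⟩) (ggspRun f j) := by
  rw [ggspRun, ggspRun, List.take_add_one, List.foldl_append,
    List.getElem?_eq_getElem (by simpa using h)]
  simp

lemma isParsevalPrefix_ggspRun (f : Fin n → H) {j : ℕ} (hj : j ≤ n) :
    IsParsevalPrefix (ggspRun f j) j ∧ prefixSpan (ggspRun f j) j = prefixSpan f j := by
  induction j with
  | zero => simp [IsParsevalPrefix, prefixSpan, prefixFrameOp]
  | succ j ih =>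
    obtain ⟨hP, hspan⟩ := ih (Nat.le_of_succ_le hj)
    have hstep := hP.ggspStep_succ (k := ⟨j, hj⟩) (f ⟨j, hj⟩)
    rw [ggspRun_succ f hj]
    exact ⟨hstep.1, by rw [hstep.2, hspan, ← prefixSpan_succ f ⟨j, hj⟩]⟩

lemma GGSP_apply_mem_prefixSpan_and_norm_le {f : Fin n → H} {k : Fin n}
    (hk : f k ∈ prefixSpan f k) :
    GGSP f k ∈ prefixSpan (GGSP f) k ∧ ‖GGSP f k‖ ≤ ‖f k‖ * ggspScale (f k) := by
  obtain ⟨hP, hspan⟩ := isParsevalPrefix_ggspRun f k.isLt.le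
  have hbase := hP.ggspStep_self_of_mem (hspan ▸ hk)
  rw [← ggspRun_succ f k.isLt] at hbase
  suffices ∀ j : ℕ, (k : ℕ) + 1 ≤ j → j ≤ n → ggspRun f j k ∈ prefixSpan (ggspRun f j) k ∧
      ‖ggspRun f j k‖ ≤ ‖f k‖ * ggspScale (f k) from
    GGSP_eq_ggspRun f ▸ this n k.isLt le_rfl
  refine Nat.le_induction (fun _ => ⟨hbase.1, hbase.2.le⟩) fun j hkj ih hj => ?_
  obtain ⟨hmem, hnorm⟩ := ih (Nat.le_of_succ_le hj)
  rw [ggspRun_succ f hj]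
  have hkl : k < ⟨j, hj⟩ := Fin.mk_lt_mk.2 hkj
  have := ggspStep_apply_mem_prefixSpan_and_norm_le_of_lt hkl (f ⟨j, hj⟩) hmem
  exact ⟨this.1, this.2.trans hnorm⟩

end Run

lemma tendsto_zero_of_sq_mul_one_add_sq_le {a : ℕ → ℝ} (ha : ∀ m, 0 ≤ a m)
    (h : ∀ m, a (m + 1) ^ 2 * (1 + a m ^ 2) ≤ a m ^ 2) : Tendsto a atTop (nhds 0) := by
  have hbound : ∀ m : ℕ, a (m + 1) ^ 2 * (m + 1) ≤ 1 := by
    intro m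
    induction m with
    | zero =>
      simp only [zero_add, Nat.cast_zero, mul_one]
      nlinarith [h 0, sq_nonneg (a 0), sq_nonneg (a 1)]
    | succ m ih =>
      push_cast
      nlinarith [h (m + 1), sq_nonneg (a (m + 1)), sq_nonneg (a (m + 2))]
  have hle : ∀ m : ℕ, a (m + 1) ≤ Real.sqrt (1 / ((m : ℝ) + 1)) := fun m =>
    Real.le_sqrt_of_sq_le ((le_div_iff₀ (by positivity)).2 (hbound m))
  refine (tendsto_add_atTop_iff_nat 1).1 (squeeze_zero (fun m => ha _) hle ?_)
  simpa using tendsto_one_div_add_atTop_nhds_zero_nat.sqrt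

theorem ggsp_iterate_dependent_tendsto_zero_general {H : Type*} [NormedAddCommGroup H]
    [InnerProductSpace ℂ H] {n : ℕ} (f : Fin n → H) (k : Fin n)
    (hk : f k ∈ Submodule.span ℂ (f '' {j : Fin n | j < k})) :
    Tendsto (fun m : ℕ => ‖(GGSP^[m] f) k‖) atTop (nhds 0) := by
  have hmem : ∀ m, (GGSP^[m] f) k ∈ prefixSpan (GGSP^[m] f) k := by
    intro m
    induction m with
    | zero => exact hk
    | succ m ih =>
      rw [Function.iterate_succ_apply']
      exact (GGSP_apply_mem_prefixSpan_and_norm_le ih).1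
  refine tendsto_zero_of_sq_mul_one_add_sq_le (fun m => norm_nonneg _) fun m => ?_
  have hle := (GGSP_apply_mem_prefixSpan_and_norm_le (hmem m)).2
  rw [← Function.iterate_succ_apply' GGSP] at hle
  calc ‖(GGSP^[m + 1] f) k‖ ^ 2 * (1 + ‖(GGSP^[m] f) k‖ ^ 2)
      ≤ (‖(GGSP^[m] f) k‖ * ggspScale ((GGSP^[m] f) k)) ^ 2 * (1 + ‖(GGSP^[m] f) k‖ ^ 2) := by
        gcongr
    _ = ‖(GGSP^[m] f) k‖ ^ 2 := by rw [mul_pow, mul_assoc, ggspScale_sq_mul, mul_one]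

/-- If `f k` lies in the span of the previous frame vectors, then the `k`-th vector of
the `m`-th GGSP iterate converges to zero as `m → ∞`. -/
theorem ggsp_iterate_dependent_tendsto_zero {H : Type*} [NormedAddCommGroup H]
    [InnerProductSpace ℂ H] [FiniteDimensional ℂ H] {n : ℕ} (f : Fin n → H)
    (hf : IsFrame f) (k : Fin n)
    (hk : f k ∈ Submodule.span ℂ (f '' {j : Fin n | j < k})) :
    Tendsto (fun m : ℕ => ‖(GGSP^[m] f) k‖) atTop (nhds 0) :=
  ggsp_iterate_dependent_tendsto_zero_general f k hk
end

section
/- Let 0 < ε < 1 and let (a_l)_{l≥0} be a sequence of nonnegative real numbers such that for every l ≥ 0 there exists γ_{l+1} ∈ [1/(1+ε), 1] with a_{l+1} = γ_{l+1} · a_l/(1 + a_l). Then for every l ≥ 1, a_l ≤ ε(1+ε)^{l−1}/((1+ε)^l − 1); in particular a_l < 2ε for all sufficiently large l. -/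
open Filter

/-
Since `γ ≤ 1` and `x ↦ x / (1 + x)` conjugates to `y ↦ y + 1` under `y = 1 / x`, one gets
`a_l ≤ 1 / l`. The stated bound is weaker: `(1+ε)^l - 1 ≤ l ε (1+ε)^(l-1)` is the mean value
inequality for `x ↦ x^l` on `[1, 1+ε]`.
-/

lemma natCast_mul_le_one_of_le_div_one_add {a : ℕ → ℝ} (ha : ∀ l, 0 ≤ a l)
    (hstep : ∀ l, a (l + 1) ≤ a l / (1 + a l)) (l : ℕ) : (l : ℝ) * a l ≤ 1 := by
  induction l with
  | zero => simp
  | succ l ih =>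
    have hpos : 0 < 1 + a l := by linarith [ha l]
    calc ((l + 1 : ℕ) : ℝ) * a (l + 1) ≤ (l + 1) * (a l / (1 + a l)) := by
          push_cast; gcongr; exact hstep l
      _ = (l * a l + a l) / (1 + a l) := by ring
      _ ≤ 1 := by rw [div_le_one hpos]; linarith

lemma one_add_pow_sub_one_le {ε : ℝ} (hε : 0 ≤ ε) (n : ℕ) :
    (1 + ε) ^ n - 1 ≤ ε * n * (1 + ε) ^ (n - 1) := by
  have hpow : 0 ≤ (1 + ε) ^ n - 1 := sub_nonneg.2 (one_le_pow₀ (by linarith))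
  have h := abs_pow_sub_pow_le (1 + ε) 1 n
  have hbase : 0 ≤ 1 + ε := by linarith
  rwa [one_pow, add_sub_cancel_left, abs_of_nonneg hpow, abs_of_nonneg hε, abs_of_nonneg hbase,
    abs_one, max_eq_left (by linarith)] at h

lemma one_div_natCast_le_mul_pow_div_pow_sub_one {ε : ℝ} (hε : 0 < ε) {l : ℕ} (hl : 1 ≤ l) :
    1 / (l : ℝ) ≤ ε * (1 + ε) ^ (l - 1) / ((1 + ε) ^ l - 1) := by
  have hden : 0 < (1 + ε) ^ l - 1 := sub_pos.2 (one_lt_pow₀ (by linarith) (by omega))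
  rw [div_le_div_iff₀ (by exact_mod_cast hl) hden]
  linarith [one_add_pow_sub_one_le hε.le l]

theorem seq_gamma_recursion_bound_general (ε : ℝ) (hε0 : 0 < ε)
    (a : ℕ → ℝ) (ha : ∀ l, 0 ≤ a l)
    (hrec : ∀ l : ℕ, ∃ γ ∈ Set.Icc (1 / (1 + ε)) 1,
      a (l + 1) = γ * (a l / (1 + a l))) :
    (∀ l : ℕ, 1 ≤ l →
        a l ≤ ε * (1 + ε) ^ (l - 1) / ((1 + ε) ^ l - 1)) ∧
      ∀ᶠ l in atTop, a l < 2 * ε := by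
  have hstep : ∀ l, a (l + 1) ≤ a l / (1 + a l) := fun l => by
    obtain ⟨γ, ⟨-, hγ⟩, heq⟩ := hrec l
    rw [heq]
    exact mul_le_of_le_one_left (div_nonneg (ha l) (by linarith [ha l])) hγ
  have hinv : ∀ l : ℕ, 1 ≤ l → a l ≤ 1 / l := fun l hl => by
    rw [le_div_iff₀' (by exact_mod_cast hl)]
    exact natCast_mul_le_one_of_le_div_one_add ha hstep l
  refine ⟨fun l hl => (hinv l hl).trans (one_div_natCast_le_mul_pow_div_pow_sub_one hε0 hl), ?_⟩
  have hsmall : ∀ᶠ l : ℕ in atTop, 1 / (l : ℝ) < 2 * ε :=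
    tendsto_one_div_atTop_nhds_zero_nat.eventually (gt_mem_nhds (by linarith))
  filter_upwards [hsmall, eventually_ge_atTop 1] with l hlt hl
  exact (hinv l hl).trans_lt hlt

/-- If `a_{l+1} = γ_{l+1} a_l / (1 + a_l)` with `γ_{l+1} ∈ [1/(1+ε), 1]`, then
`a_l ≤ ε (1+ε)^{l-1} / ((1+ε)^l - 1)`, so `a_l < 2ε` for all large `l`. -/
theorem seq_gamma_recursion_bound (ε : ℝ) (hε0 : 0 < ε) (hε1 : ε < 1)
    (a : ℕ → ℝ) (ha : ∀ l, 0 ≤ a l)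
    (hrec : ∀ l : ℕ, ∃ γ ∈ Set.Icc (1 / (1 + ε)) 1,
      a (l + 1) = γ * (a l / (1 + a l))) :
    (∀ l : ℕ, 1 ≤ l →
        a l ≤ ε * (1 + ε) ^ (l - 1) / ((1 + ε) ^ l - 1)) ∧
      ∀ᶠ l in atTop, a l < 2 * ε :=
  seq_gamma_recursion_bound_general ε hε0 a ha hrec
end

section
/- Let H be a finite-dimensional complex Hilbert space and let (f_1,…,f_n) be any finite sequence of vectors in H. Then Φ(f_1,…,f_n) is a Parseval frame for span{f_1,…,f_n}, and span of the output equals span{f_1,…,f_n}. -/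
open scoped ComplexInnerProductSpace
open Finset Filter

/-- `(f i)₁ⁿ`, a tuple of vectors of `W`, is a Parseval frame for the subspace `W`. -/
def IsParsevalFrameFor {H : Type*} [NormedAddCommGroup H] [InnerProductSpace ℂ H]
    {n : ℕ} (W : Submodule ℂ H) (f : Fin n → H) : Prop :=
  (∀ i, f i ∈ W) ∧ ∀ w ∈ W, ∑ i, ‖⟪w, f i⟫‖ ^ 2 = ‖w‖ ^ 2

/-! After `m` steps the first `m` output vectors form a Parseval frame for
`W = span {f₁, …, fₘ}`; the span claim then follows because a Parseval frame reconstructs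
every `w ∈ W` as `∑ ⟪gᵢ, w⟫ gᵢ` (by polarization, `inner_map_self_eq_zero`).

Reconstruction also makes the residual `u = x - ∑ ⟪gᵢ, x⟫ gᵢ` of the next vector `x`
orthogonal to `W`. If `u ≠ 0`, the step appends the unit vector `u / ‖u‖ ⊥ W`. If `u = 0`,
then `x ∈ W` and the step replaces `gᵢ` by `A gᵢ` with the self-adjoint
`A = 1 + r x ⊗ x`, `1 + r‖x‖² = (1 + ‖x‖²)^(-1/2)`, and appends `x / √(1 + ‖x‖²)`; then
`∑ |⟪w, A gᵢ⟫|² + |⟪w, x⟫|² / (1 + ‖x‖²) = ‖A w‖² + |⟪w, x⟫|² / (1 + ‖x‖²) = ‖w‖²`. -/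

open Function Submodule ComplexConjugate

section ParsevalFrame

variable {H : Type*} [NormedAddCommGroup H] [InnerProductSpace ℂ H] {ι : Type*}

theorem sum_inner_smul_eq_self_of_parseval [Fintype ι] {g : ι → H}
    (hg : ∀ w, ∑ i, ‖⟪w, g i⟫‖ ^ 2 = ‖w‖ ^ 2) (w : H) : ∑ i, ⟪g i, w⟫ • g i = w := by
  let T : H →ₗ[ℂ] H := ∑ i, (innerₛₗ ℂ (g i)).smulRight (g i) - LinearMap.id
  have hT : ∀ x, ⟪T x, x⟫ = 0 := fun x => by
    have hsq : ∀ i, ⟪⟪g i, x⟫ • g i, x⟫ = ((‖⟪x, g i⟫‖ ^ 2 : ℝ) : ℂ) := fun i => by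
      rw [inner_smul_left, RCLike.conj_mul, norm_inner_symm]
      norm_cast
    simp only [T, LinearMap.sub_apply, LinearMap.sum_apply, LinearMap.smulRight_apply,
      innerₛₗ_apply_apply, LinearMap.id_apply, inner_sub_left, sum_inner, hsq]
    rw [← Complex.ofReal_sum, hg, inner_self_eq_norm_sq_to_K, Complex.ofReal_pow]
    exact sub_self _
  have := LinearMap.congr_fun ((inner_map_self_eq_zero T).mp hT) w
  simpa [T, sub_eq_zero] using this

def IsParsevalFrameOn (W : Submodule ℂ H) (g : ι → H) (s : Finset ι) : Prop :=
  (∀ i ∈ s, g i ∈ W) ∧ ∀ w ∈ W, ∑ i ∈ s, ‖⟪w, g i⟫‖ ^ 2 = ‖w‖ ^ 2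

variable {W : Submodule ℂ H} {g : ι → H} {s : Finset ι}

theorem IsParsevalFrameOn.sum_inner_smul_eq (hg : IsParsevalFrameOn W g s) {w : H}
    (hw : w ∈ W) : ∑ i ∈ s, ⟪g i, w⟫ • g i = w := by
  let g' : s → W := fun i => ⟨g i, hg.1 i i.2⟩
  have hg' : ∀ v : W, ∑ i, ‖⟪v, g' i⟫‖ ^ 2 = ‖v‖ ^ 2 := fun v => by
    simpa [g', Finset.sum_attach s (fun i => ‖⟪(v : H), g i⟫‖ ^ 2)] using hg.2 v v.2
  have := congrArg Subtype.val (sum_inner_smul_eq_self_of_parseval hg' ⟨w, hw⟩)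
  simpa [g', Finset.sum_attach s (fun i => ⟪g i, w⟫ • g i)] using this

theorem IsParsevalFrameOn.span_image_eq (hg : IsParsevalFrameOn W g s) :
    span ℂ (g '' s) = W := by
  refine le_antisymm (span_le.mpr ?_) fun w hw => ?_
  · rintro _ ⟨i, hi, rfl⟩
    exact hg.1 i hi
  · rw [← hg.sum_inner_smul_eq hw]
    exact sum_mem fun i hi => smul_mem _ _ (subset_span ⟨i, hi, rfl⟩)

theorem isParsevalFrameOn_insert_update_iff [DecidableEq ι] {k : ι} (hk : k ∉ s) (v : H) :
    IsParsevalFrameOn W (update g k v) (insert k s) ↔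
      v ∈ W ∧ (∀ i ∈ s, g i ∈ W) ∧ ∀ w ∈ W, ‖⟪w, v⟫‖ ^ 2 + ∑ i ∈ s, ‖⟪w, g i⟫‖ ^ 2 = ‖w‖ ^ 2 := by
  have hupd : ∀ i ∈ s, update g k v i = g i := fun i hi =>
    update_of_ne (ne_of_mem_of_not_mem hi hk) v g
  have hmem : (∀ i ∈ s, update g k v i ∈ W) ↔ ∀ i ∈ s, g i ∈ W :=
    forall₂_congr fun i hi => by rw [hupd i hi]
  have hsum : ∀ w, ∑ i ∈ s, ‖⟪w, update g k v i⟫‖ ^ 2 = ∑ i ∈ s, ‖⟪w, g i⟫‖ ^ 2 := fun w =>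
    Finset.sum_congr rfl fun i hi => by rw [hupd i hi]
  simp only [IsParsevalFrameOn, Finset.forall_mem_insert, Finset.sum_insert hk, update_self,
    hmem, hsum, and_assoc]

theorem IsParsevalFrameOn.insert_update_zero [DecidableEq ι] (hg : IsParsevalFrameOn W g s)
    {k : ι} (hk : k ∉ s) : IsParsevalFrameOn W (update g k 0) (insert k s) :=
  (isParsevalFrameOn_insert_update_iff hk 0).mpr
    ⟨W.zero_mem, hg.1, fun w hw => by simpa using hg.2 w hw⟩

theorem IsParsevalFrameOn.insert_update_of_orthogonal [DecidableEq ι]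
    (hg : IsParsevalFrameOn W g s) {k : ι} (hk : k ∉ s) {e : H} (he : ‖e‖ = 1)
    (hperp : ∀ y ∈ W, ⟪y, e⟫ = 0) :
    IsParsevalFrameOn (W ⊔ ℂ ∙ e) (update g k e) (insert k s) := by
  refine (isParsevalFrameOn_insert_update_iff hk e).mpr
    ⟨mem_sup_right (mem_span_singleton_self e), fun i hi => mem_sup_left (hg.1 i hi),
      fun w hw => ?_⟩
  obtain ⟨y, hy, _, hc, rfl⟩ := mem_sup.mp hw
  obtain ⟨c, rfl⟩ := mem_span_singleton.mp hc
  have hye : ⟪y, e⟫ = 0 := hperp y hy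
  have hey : ∀ i ∈ s, ⟪e, g i⟫ = 0 := fun i hi => by
    rw [← inner_conj_symm, hperp _ (hg.1 i hi), map_zero]
  have hterms : ∀ i ∈ s, ‖⟪y + c • e, g i⟫‖ ^ 2 = ‖⟪y, g i⟫‖ ^ 2 := fun i hi => by
    rw [inner_add_left, inner_smul_left, hey i hi, mul_zero, add_zero]
  have hcoef : ⟪y + c • e, e⟫ = conj c := by
    rw [inner_add_left, hye, zero_add, inner_smul_left, inner_self_eq_norm_sq_to_K, he]
    simp
  have hnorm : ‖y + c • e‖ ^ 2 = ‖y‖ ^ 2 + ‖c‖ ^ 2 := by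
    rw [norm_add_sq (𝕜 := ℂ), inner_smul_right, hye, mul_zero, map_zero, norm_smul, he]
    simp
  rw [Finset.sum_congr rfl hterms, hg.2 y hy, hcoef, RCLike.norm_conj, hnorm, add_comm]

theorem IsParsevalFrameOn.insert_of_mem [DecidableEq ι] (hg : IsParsevalFrameOn W g s) {k : ι}
    (hk : k ∉ s) {x : H} (hx : x ∈ W) (hx0 : x ≠ 0) {g' : ι → H}
    (hg's : ∀ i ∈ s,
      g' i = g i + ((1 / ‖x‖ ^ 2) * (1 / √(1 + ‖x‖ ^ 2) - 1) : ℝ) • (⟪x, g i⟫ • x))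
    (hg'k : g' k = (√(1 + ‖x‖ ^ 2))⁻¹ • x) :
    IsParsevalFrameOn W g' (insert k s) := by
  set t := ‖x‖ ^ 2 with ht
  have ht0 : 0 < t := by positivity
  set σ := √(1 + t)
  have hσ2 : σ ^ 2 = 1 + t := Real.sq_sqrt (by positivity)
  have hσ0 : 0 < σ := by positivity
  set r : ℝ := 1 / t * (1 / σ - 1) with hr
  clear_value r σ t
  have hkey : σ⁻¹ ^ 2 + 2 * r + r ^ 2 * t = 0 := by
    subst hr
    field_simp
    linear_combination -hσ2
  refine ⟨Finset.forall_mem_insert _ _ _ |>.mpr ⟨?_, fun i hi => ?_⟩, fun w hw => ?_⟩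
  · rw [hg'k]
    exact smul_of_tower_mem _ _ hx
  · rw [hg's i hi]
    exact add_mem (hg.1 i hi) (smul_of_tower_mem _ _ (smul_mem _ _ hx))
  set b := ⟪x, w⟫
  set v := w + ((r : ℂ) * b) • x
  have hwx : ⟪w, x⟫ = conj b := (inner_conj_symm w x).symm
  have hinner : ∀ i ∈ s, ⟪w, g' i⟫ = ⟪v, g i⟫ := fun i hi => by
    rw [hg's i hi, ← Complex.coe_smul, inner_add_right, inner_add_left, inner_smul_right,
      inner_smul_right, inner_smul_left, map_mul, Complex.conj_ofReal, hwx]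
    ring
  have hv : ‖v‖ ^ 2 = ‖w‖ ^ 2 + (2 * r + r ^ 2 * t) * ‖b‖ ^ 2 := by
    have hre : ⟪w, ((r : ℂ) * b) • x⟫ = ((r * ‖b‖ ^ 2 : ℝ) : ℂ) := by
      rw [inner_smul_right, hwx, mul_assoc, RCLike.mul_conj]
      push_cast
      rfl
    rw [norm_add_sq (𝕜 := ℂ), hre, RCLike.re_to_complex, Complex.ofReal_re, norm_smul, norm_mul,
      Complex.norm_real, Real.norm_eq_abs, mul_pow, mul_pow, sq_abs, ← ht]
    ring
  have hk' : ‖⟪w, g' k⟫‖ = σ⁻¹ * ‖b‖ := by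
    rw [hg'k, ← Complex.coe_smul, inner_smul_right, norm_mul, Complex.norm_real,
      Real.norm_eq_abs, abs_of_pos (inv_pos.mpr hσ0), norm_inner_symm]
  rw [Finset.sum_insert hk, Finset.sum_congr rfl fun i hi => by rw [hinner i hi],
    hg.2 v (add_mem hw (smul_mem _ _ hx)), hk', hv]
  linear_combination ‖b‖ ^ 2 * hkey

noncomputable def frameResidual (s : Finset ι) (g : ι → H) (x : H) : H :=
  x - ∑ j ∈ s, ⟪g j, x⟫ • g j

theorem IsParsevalFrameOn.inner_frameResidual_eq_zero (hg : IsParsevalFrameOn W g s) {y : H}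
    (hy : y ∈ W) (x : H) : ⟪y, frameResidual s g x⟫ = 0 := by
  rw [frameResidual, inner_sub_right, sub_eq_zero, inner_sum]
  conv_lhs => rw [← hg.sum_inner_smul_eq hy, sum_inner]
  refine Finset.sum_congr rfl fun j _ => ?_
  rw [inner_smul_left, inner_smul_right, inner_conj_symm, mul_comm]

theorem mem_of_frameResidual_eq_zero (hg : ∀ i ∈ s, g i ∈ W) {x : H}
    (hx : frameResidual s g x = 0) : x ∈ W := by
  rw [frameResidual, sub_eq_zero] at hx
  rw [hx]
  exact sum_mem fun j hj => smul_mem _ _ (hg j hj)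

theorem sup_span_frameResidual (hg : ∀ i ∈ s, g i ∈ W) (x : H) :
    W ⊔ ℂ ∙ frameResidual s g x = W ⊔ ℂ ∙ x := by
  have hsum : ∑ j ∈ s, ⟪g j, x⟫ • g j ∈ W := sum_mem fun j hj => smul_mem _ _ (hg j hj)
  refine le_antisymm (sup_le le_sup_left ?_) (sup_le le_sup_left ?_) <;>
    rw [span_singleton_le_iff_mem]
  · exact sub_mem (mem_sup_right (mem_span_singleton_self x)) (mem_sup_left hsum)
  · simpa [frameResidual] using
      add_mem (mem_sup_right (mem_span_singleton_self (frameResidual s g x))) (mem_sup_left hsum)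

end ParsevalFrame

section GGSP

variable {H : Type*} [NormedAddCommGroup H] [InnerProductSpace ℂ H] {n : ℕ}

def firstIndices (n m : ℕ) : Finset (Fin n) := univ.filter fun i => (i : ℕ) < m

theorem firstIndices_zero : firstIndices n 0 = ∅ := by
  simp [firstIndices]

theorem firstIndices_self : firstIndices n n = univ := by
  simp [firstIndices]

theorem firstIndices_succ (k : Fin n) : firstIndices n (k + 1) = insert k (firstIndices n k) := by
  ext i
  simp only [firstIndices, mem_filter, mem_univ, true_and, mem_insert, Fin.ext_iff]
  omega

theorem notMem_firstIndices (k : Fin n) : k ∉ firstIndices n k := by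
  simp [firstIndices]

theorem filter_lt_eq_firstIndices (k : Fin n) [DecidablePred (· < k)] :
    univ.filter (· < k) = firstIndices n k := by
  ext i
  simp [firstIndices]

theorem isParsevalFrameOn_ggspStep {W : Submodule ℂ H} {g : Fin n → H} {k : Fin n}
    (hg : IsParsevalFrameOn W g (firstIndices n k)) (x : H) :
    IsParsevalFrameOn (W ⊔ ℂ ∙ x) (ggspStep k x g) (firstIndices n (k + 1)) := by
  rw [firstIndices_succ]
  have hk := notMem_firstIndices k
  by_cases hx : x = 0
  · subst hx
    rw [ggspStep, if_pos rfl, span_singleton_eq_bot.mpr rfl, sup_bot_eq]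
    exact hg.insert_update_zero hk
  rw [ggspStep, if_neg hx]
  dsimp only
  split_ifs with hu
  all_goals simp only [filter_lt_eq_firstIndices, ← frameResidual.eq_1] at hu ⊢
  · have hxW : x ∈ W := mem_of_frameResidual_eq_zero hg.1 hu
    rw [sup_eq_left.mpr ((span_singleton_le_iff_mem _ _).mpr hxW)]
    refine hg.insert_of_mem hk hxW hx (fun i hi => ?_) (by simp)
    simp only [firstIndices, mem_filter, mem_univ, true_and, Fin.val_fin_lt] at hi
    simp only [if_pos hi]
  · set u := frameResidual (firstIndices n k) g x
    have hu' : ‖u‖ ≠ 0 := norm_ne_zero_iff.mpr hu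
    have hspan : ℂ ∙ (‖u‖⁻¹ • u) = ℂ ∙ u := by
      rw [← Complex.coe_smul]
      exact span_singleton_smul_eq (by simpa using hu') u
    rw [← sup_span_frameResidual hg.1, ← hspan]
    refine hg.insert_update_of_orthogonal hk ?_ fun y hy => ?_
    · rw [norm_smul, norm_inv, norm_norm, inv_mul_cancel₀ hu']
    · rw [← Complex.coe_smul, inner_smul_right, hg.inner_frameResidual_eq_zero hy, mul_zero]

theorem span_image_firstIndices_succ (f : Fin n → H) (k : Fin n) :
    span ℂ (f '' firstIndices n (k + 1)) = span ℂ (f '' firstIndices n k) ⊔ ℂ ∙ f k := by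
  rw [firstIndices_succ, coe_insert, Set.image_insert_eq, span_insert, sup_comm]

theorem isParsevalFrameOn_foldl_take (f : Fin n → H) {m : ℕ} (hm : m ≤ n) :
    IsParsevalFrameOn (span ℂ (f '' firstIndices n m))
      (((List.finRange n).take m).foldl (fun g k => ggspStep k (f k) g) f) (firstIndices n m) := by
  induction m with
  | zero => simp [firstIndices_zero, IsParsevalFrameOn]
  | succ m ih =>
    have hlen : m < (List.finRange n).length := by simpa using hm
    have hk : ((List.finRange n)[m] : ℕ) = m := by simp
    rw [List.take_add_one, List.getElem?_eq_getElem hlen, Option.toList_some, List.foldl_concat]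
    generalize (List.finRange n)[m] = k at hk ⊢
    subst hk
    rw [span_image_firstIndices_succ]
    exact isParsevalFrameOn_ggspStep (ih (by omega)) (f k)

end GGSP

theorem ggsp_parseval_for_span_general {H : Type*} [NormedAddCommGroup H]
    [InnerProductSpace ℂ H] {n : ℕ} (f : Fin n → H) :
    IsParsevalFrameFor (Submodule.span ℂ (Set.range f)) (GGSP f) ∧
      Submodule.span ℂ (Set.range (GGSP f)) = Submodule.span ℂ (Set.range f) := by
  have h := isParsevalFrameOn_foldl_take f le_rfl
  rw [List.take_of_length_le (by simp), firstIndices_self, coe_univ, Set.image_univ] at h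
  change IsParsevalFrameOn _ (GGSP f) _ at h
  refine ⟨⟨fun i => h.1 i (mem_univ i), h.2⟩, ?_⟩
  simpa using h.span_image_eq

/-- For any finite sequence of vectors, `Φ f` is a Parseval frame for
`span {f₁, …, fₙ}`, and the span of the output equals the span of the input. -/
theorem ggsp_parseval_for_span {H : Type*} [NormedAddCommGroup H]
    [InnerProductSpace ℂ H] [FiniteDimensional ℂ H] {n : ℕ} (f : Fin n → H) :
    IsParsevalFrameFor (Submodule.span ℂ (Set.range f)) (GGSP f) ∧
      Submodule.span ℂ (Set.range (GGSP f)) = Submodule.span ℂ (Set.range f) :=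
  ggsp_parseval_for_span_general f
end
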